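/- Regular Bohr sets are ubiquitous: Let G be a finite additive (abelian) group, let S ⊆ Ĝ be a nonempty set of characters with |S| = d, and let 0 < ε < 1. Then there exists ρ ∈ [ε, 2ε] such that the Bohr set B(S,ρ) is regular. -/

import Mathlib

/-- The Bohr set `B(S,ρ) = {x ∈ G : ‖ξ·x‖_{ℝ/ℤ} < ρ for all ξ ∈ S}`, where `S` is a finite
set of characters (homomorphisms `G → ℝ/ℤ`) and the norm on `ℝ/ℤ` is the distance to the
nearest integer. -/
def bohr {G : Type*} [AddCommGroup G] (S : Finset (G →+ AddCircle (1 : ℝ))) (ρ : ℝ) : Set G :=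
  {x | ∀ ξ ∈ S, ‖ξ x‖ < ρ}

/-- A Bohr set `B(S,ρ)` with `|S| = d` is regular if
`(1 - 100d|κ|)|B(S,ρ)| ≤ |B(S,(1+κ)ρ)| ≤ (1 + 100d|κ|)|B(S,ρ)|` whenever `|κ| ≤ 1/(100d)`. -/
def IsRegularBohr {G : Type*} [AddCommGroup G] [Fintype G]
    (S : Finset (G →+ AddCircle (1 : ℝ))) (ρ : ℝ) : Prop :=
  ∀ κ : ℝ, |κ| ≤ 1 / (100 * S.card) →
    (1 - 100 * S.card * |κ|) * ((bohr S ρ).ncard : ℝ) ≤ ((bohr S ((1 + κ) * ρ)).ncard : ℝ) ∧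
    ((bohr S ((1 + κ) * ρ)).ncard : ℝ) ≤ (1 + 100 * S.card * |κ|) * ((bohr S ρ).ncard : ℝ)

/-!
Write `N(r) = |B(S, r)|` and `U = ε / (50d)`. A covering argument gives `N(6r) ≤ 12^d N(r)`,
so `log N` grows by less than `3d` across `[ε - U, 2ε + U]`. A Vitali covering argument on
`[ε, 2ε]` then yields a `ρ` with `log N(ρ + u) - log N(ρ - u) ≤ 25du/ε` for all `0 < u ≤ U`,
and exponentiating this two-sided bound at `u = |κ|ρ` is regularity.
-/

open Set Real

theorem AddCircle.exists_coe_eq_and_abs_eq_norm {p : ℝ} (z : AddCircle p) :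
    ∃ a : ℝ, (a : AddCircle p) = z ∧ |a| = ‖z‖ := by
  obtain ⟨b, rfl⟩ := QuotientAddGroup.mk_surjective z
  refine ⟨b - round (p⁻¹ * b) * p, ?_, (AddCircle.norm_eq p).symm⟩
  rw [AddCircle.coe_sub, ← zsmul_eq_mul, AddCircle.coe_zsmul, AddCircle.coe_period, smul_zero,
    sub_zero]

theorem Monotone.sum_sub_le_of_pairwiseDisjoint {f : ℝ → ℝ} (hf : Monotone f) {ι : Type*}
    {l r : ι → ℝ} {A B : ℝ} (s : Finset ι) (hlr : ∀ i ∈ s, l i < r i)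
    (hdisj : (s : Set ι).PairwiseDisjoint fun i => Ioo (l i) (r i)) (hAB : A ≤ B)
    (hsub : ∀ i ∈ s, A ≤ l i ∧ r i ≤ B) :
    ∑ i ∈ s, (f (r i) - f (l i)) ≤ f B - f A := by
  classical
  induction s using Finset.induction_on_max_value r generalizing B with
  | empty => simpa using hf hAB
  | insert j s hj hmax ih =>
    have hleft : ∀ i ∈ s, r i ≤ l j := by
      intro i hi
      have hd := hdisj (by simp [hi]) (by simp) (ne_of_mem_of_not_mem hi hj)
      rw [Function.onFun, Ioo_disjoint_Ioo, min_eq_left (hmax i hi)] at hd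
      exact (le_max_iff.1 hd).resolve_left (hlr i (by simp [hi])).not_ge
    rw [Finset.sum_insert hj]
    have hs := ih (fun i hi => hlr i (by simp [hi])) (hdisj.subset (by simp))
      (hsub j (by simp)).1 fun i hi => ⟨(hsub i (by simp [hi])).1, hleft i hi⟩
    linarith [hf (hsub j (by simp)).2]

theorem Real.sub_le_sum_of_Icc_subset_biUnion_ball {ι : Type*} {a b : ℝ} (s : Finset ι)
    {x r : ι → ℝ} (hr : ∀ i ∈ s, 0 ≤ r i)
    (hcover : Icc a b ⊆ ⋃ i ∈ s, Metric.ball (x i) (r i)) :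
    b - a ≤ ∑ i ∈ s, 2 * r i := by
  have hvol := (MeasureTheory.measure_mono (μ := MeasureTheory.volume) hcover).trans
    (MeasureTheory.measure_biUnion_finset_le s _)
  simp only [Real.volume_Icc, Real.volume_ball] at hvol
  rwa [← ENNReal.ofReal_sum_of_nonneg fun i hi => by linarith [hr i hi],
    ENNReal.ofReal_le_ofReal_iff (Finset.sum_nonneg fun i hi => by linarith [hr i hi])] at hvol

/-- If every point of `[a, b]` were the centre of an interval of radius `≤ U` on which `f` has
slope `> c`, a disjoint Vitali subfamily (enlargement factor `4`) would carry a growth of at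
least `c (b - a) / 8`, more than `f` has on `[a - U, b + U]`. -/
theorem Monotone.exists_forall_sub_le_mul {f : ℝ → ℝ} (hf : Monotone f) {a b c U : ℝ}
    (hab : a ≤ b) (hc : 0 ≤ c) (hgrowth : 8 * (f (b + U) - f (a - U)) < c * (b - a)) :
    ∃ t ∈ Icc a b, ∀ u ∈ Ioc 0 U, f (t + u) - f (t - u) ≤ c * u := by
  by_contra! hsteep
  choose r hr hsteep using fun t : Icc a b => hsteep t t.2
  have hU : 0 < U := (hr ⟨a, left_mem_Icc.2 hab⟩).1.trans_le (hr _).2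
  obtain ⟨s, hs⟩ := isCompact_Icc.elim_finite_subcover
    (fun t : Icc a b => Metric.ball (t : ℝ) (r t)) (fun _ => Metric.isOpen_ball)
    fun t ht => mem_iUnion.2 ⟨⟨t, ht⟩, Metric.mem_ball_self (hr _).1⟩
  obtain ⟨v, hvs, hvdisj, hvcover⟩ := Vitali.exists_disjoint_subfamily_covering_enlargement_ball
    (s : Set (Icc a b)) (fun t => (t : ℝ)) r U (fun t _ => (hr t).2) 4 (by norm_num)
  set Q := (s.finite_toSet.subset hvs).toFinset
  have hQ : (Q : Set (Icc a b)) = v := Set.Finite.coe_toFinset _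
  have hcover : Icc a b ⊆ ⋃ q ∈ Q, Metric.ball (q : ℝ) (4 * r q) := by
    intro x hx
    obtain ⟨t, ht, hxt⟩ := mem_iUnion₂.1 (hs hx)
    obtain ⟨q, hq, hsub⟩ := hvcover t ht
    exact mem_biUnion (hQ ▸ hq) (hsub hxt)
  have hlength := Real.sub_le_sum_of_Icc_subset_biUnion_ball Q
    (fun q _ => by linarith [(hr q).1]) hcover
  have hdisj : (Q : Set (Icc a b)).PairwiseDisjoint fun q => Ioo ((q : ℝ) - r q) (q + r q) := by
    simpa only [hQ, Real.ball_eq_Ioo] using hvdisj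
  have hincr := hf.sum_sub_le_of_pairwiseDisjoint Q (fun q _ => by linarith [(hr q).1]) hdisj
    (A := a - U) (B := b + U) (by linarith)
    fun q _ => ⟨by linarith [q.2.1, (hr q).2], by linarith [q.2.2, (hr q).2]⟩
  have hslopes : ∑ q ∈ Q, c * r q ≤ ∑ q ∈ Q, (f (q + r q) - f (q - r q)) :=
    Finset.sum_le_sum fun q _ => (hsteep q).le
  have hlength_mul : c * (b - a) ≤ 8 * ∑ q ∈ Q, c * r q :=
    calc c * (b - a) ≤ c * ∑ q ∈ Q, 2 * (4 * r q) := mul_le_mul_of_nonneg_left hlength hc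
      _ = 8 * ∑ q ∈ Q, c * r q := by rw [Finset.mul_sum, Finset.mul_sum]; ring_nf
  linarith

section LocalGrowth

variable {F : ℝ → ℝ} {ρ c U u : ℝ}

theorem Monotone.le_one_add_two_mul_of_forall_le_exp (hF : Monotone F) (hFρ : 0 ≤ F ρ)
    (hc : 0 ≤ c) (h : ∀ u ∈ Ioc 0 U, F (ρ + u) ≤ exp (c * u) * F (ρ - u))
    (hu : u ∈ Icc 0 U) (hcu : c * u ≤ 1) :
    F (ρ + u) ≤ (1 + 2 * (c * u)) * F ρ := by
  rcases hu.1.eq_or_lt with rfl | hu0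
  · simp
  have hexp : exp (c * u) ≤ 1 + 2 * (c * u) := by
    have hcu0 : 0 ≤ c * u := mul_nonneg hc hu0.le
    have := abs_le.1 (abs_exp_sub_one_sub_id_le (abs_le.2 ⟨by linarith, hcu⟩))
    nlinarith
  calc F (ρ + u) ≤ exp (c * u) * F (ρ - u) := h u ⟨hu0, hu.2⟩
    _ ≤ exp (c * u) * F ρ := mul_le_mul_of_nonneg_left (hF (by linarith)) (exp_pos _).le
    _ ≤ (1 + 2 * (c * u)) * F ρ := mul_le_mul_of_nonneg_right hexp hFρ

theorem Monotone.one_sub_mul_le_of_forall_le_exp (hF : Monotone F) (hFρ : 0 ≤ F ρ)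
    (h : ∀ u ∈ Ioc 0 U, F (ρ + u) ≤ exp (c * u) * F (ρ - u)) (hu : u ∈ Icc 0 U) :
    (1 - c * u) * F ρ ≤ F (ρ - u) := by
  rcases hu.1.eq_or_lt with rfl | hu0
  · simp
  have hρu : F ρ ≤ exp (c * u) * F (ρ - u) := (hF (by linarith)).trans (h u ⟨hu0, hu.2⟩)
  calc (1 - c * u) * F ρ ≤ exp (-(c * u)) * F ρ :=
        mul_le_mul_of_nonneg_right (by linarith [add_one_le_exp (-(c * u))]) hFρ
    _ ≤ exp (-(c * u)) * (exp (c * u) * F (ρ - u)) :=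
        mul_le_mul_of_nonneg_left hρu (exp_pos _).le
    _ = F (ρ - u) := by rw [← mul_assoc, ← exp_add, neg_add_cancel, exp_zero, one_mul]

end LocalGrowth

theorem Real.log_twelve_lt_three : log 12 < 3 := by
  rw [log_lt_iff_lt_exp (by norm_num), show (3 : ℝ) = 1 + 1 + 1 by norm_num, exp_add, exp_add]
  nlinarith [exp_one_gt_d9]

theorem Real.le_exp_mul_of_log_sub_le {x y a : ℝ} (hx : 0 < x) (hy : 0 < y)
    (h : log x - log y ≤ a) : x ≤ exp a * y := by
  rw [← log_le_log_iff hx (by positivity), log_mul (exp_pos a).ne' hy.ne', log_exp]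
  linarith

section Bohr

variable {G : Type*} [AddCommGroup G] (S : Finset (G →+ AddCircle (1 : ℝ)))

theorem bohr_mono : Monotone (bohr S) :=
  fun _ _ h _ hx ξ hξ => (hx ξ hξ).trans_le h

theorem zero_mem_bohr {ρ : ℝ} (hρ : 0 < ρ) : (0 : G) ∈ bohr S ρ := by
  intro ξ _
  simpa using hρ

variable [Finite G]

theorem ncard_bohr_pos {ρ : ℝ} (hρ : 0 < ρ) : 0 < (bohr S ρ).ncard :=
  (Set.ncard_pos (Set.toFinite _)).2 ⟨0, zero_mem_bohr S hρ⟩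

theorem monotone_ncard_bohr : Monotone fun ρ => (bohr S ρ).ncard :=
  fun _ _ h => Set.ncard_le_ncard (bohr_mono S h) (Set.toFinite _)

-- `log 0 = 0` keeps this monotone through the radii `ρ ≤ 0`, where the Bohr set is empty.
theorem monotone_log_ncard_bohr : Monotone fun ρ => log (bohr S ρ).ncard := by
  intro ρ ρ' h
  rcases Nat.eq_zero_or_pos (bohr S ρ).ncard with h0 | hpos
  · simpa [h0] using log_natCast_nonneg _
  · exact log_le_log (by exact_mod_cast hpos) (by exact_mod_cast monotone_ncard_bohr S h)

/-- Rounding the centred lifts of the `ξ x` down to multiples of `ρ` sorts `B(S, kρ)` into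
`(2k)^d` classes, each a translate of a subset of `B(S, ρ)`. -/
theorem ncard_bohr_nat_mul_le (k : ℕ) {ρ : ℝ} (hρ : 0 < ρ) :
    (bohr S (k * ρ)).ncard ≤ (2 * k) ^ S.card * (bohr S ρ).ncard := by
  classical
  have := Fintype.ofFinite G
  choose lift hlift_coe hlift_abs using
    fun z : AddCircle (1 : ℝ) => AddCircle.exists_coe_eq_and_abs_eq_norm z
  let Φ : G → S → ℤ := fun x ξ => ⌊lift (ξ.1 x) / ρ⌋
  have maps_to : ∀ x ∈ (bohr S (k * ρ)).toFinset,
      Φ x ∈ Fintype.piFinset fun _ : S => Finset.Ico (-k : ℤ) k := by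
    intro x hx
    refine Fintype.mem_piFinset.2 fun ξ => Finset.mem_Ico.2 ?_
    have hξ : -(k : ℝ) < lift (ξ.1 x) / ρ ∧ lift (ξ.1 x) / ρ < k := by
      rw [lt_div_iff₀ hρ, div_lt_iff₀ hρ, neg_mul, ← abs_lt, hlift_abs]
      exact Set.mem_toFinset.1 hx ξ.1 ξ.2
    exact ⟨Int.le_floor.2 (by push_cast; exact hξ.1.le),
      Int.floor_lt.2 (by exact_mod_cast hξ.2)⟩
  have sub_mem : ∀ x y, Φ x = Φ y → x - y ∈ bohr S ρ := by
    intro x y hxy ξ hξ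
    have hfloor := Int.abs_sub_lt_one_of_floor_eq_floor (congrFun hxy ⟨ξ, hξ⟩)
    rw [← sub_div, abs_div, abs_of_pos hρ, div_lt_one hρ] at hfloor
    calc ‖ξ (x - y)‖ = ‖((lift (ξ x) - lift (ξ y) : ℝ) : AddCircle (1 : ℝ))‖ := by
          rw [map_sub, AddCircle.coe_sub, hlift_coe, hlift_coe]
      _ ≤ |lift (ξ x) - lift (ξ y)| := QuotientAddGroup.norm_mk_le_norm
      _ < ρ := hfloor
  have fiber_card : ∀ φ ∈ Fintype.piFinset fun _ : S => Finset.Ico (-k : ℤ) k,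
      ((bohr S (k * ρ)).toFinset.filter fun x => Φ x = φ).card ≤
        (bohr S ρ).toFinset.card := by
    intro φ _
    rcases Finset.eq_empty_or_nonempty (((bohr S (k * ρ)).toFinset).filter fun x => Φ x = φ)
      with hempty | ⟨y, hy⟩
    · simp [hempty]
    refine Finset.card_le_card_of_injOn (· - y) (fun x hx => ?_) (fun _ _ _ _ => sub_left_inj.1)
    simp only [Finset.mem_coe, Finset.mem_filter] at hx hy
    exact Set.mem_toFinset.2 (sub_mem x y (hx.2.trans hy.2.symm))
  have card_classes :
      (Fintype.piFinset fun _ : S => Finset.Ico (-k : ℤ) k).card = (2 * k) ^ S.card := by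
    rw [Fintype.card_piFinset, Finset.prod_const, Int.card_Ico, Finset.card_univ,
      Fintype.card_coe, sub_neg_eq_add, ← two_mul]
    rfl
  rw [Set.ncard_eq_toFinset_card', Set.ncard_eq_toFinset_card', ← card_classes]
  exact (Finset.card_le_mul_card_image_of_maps_to maps_to _ fiber_card).trans_eq (mul_comm _ _)

theorem log_ncard_bohr_le_of_le_nat_mul {k : ℕ} (hk : 0 < k) {r r' : ℝ} (hr : 0 < r)
    (hr' : r' ≤ k * r) :
    log (bohr S r').ncard ≤ S.card * log (2 * k) + log (bohr S r).ncard := by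
  have hpos : (0 : ℝ) < (bohr S r).ncard := Nat.cast_pos.2 (ncard_bohr_pos S hr)
  calc log (bohr S r').ncard ≤ log (bohr S (k * r)).ncard := monotone_log_ncard_bohr S hr'
    _ ≤ log ((2 * k) ^ S.card * (bohr S r).ncard) :=
        log_le_log (Nat.cast_pos.2 (ncard_bohr_pos S (by positivity)))
          (by exact_mod_cast ncard_bohr_nat_mul_le S k hr)
    _ = S.card * log (2 * k) + log (bohr S r).ncard := by
        rw [log_mul (by positivity) hpos.ne', log_pow]

theorem log_ncard_bohr_sub_lt (hS : S.Nonempty) {ε U : ℝ} (hε : 0 < ε) (hU : 7 * U ≤ 4 * ε) :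
    log (bohr S (2 * ε + U)).ncard - log (bohr S (ε - U)).ncard < 3 * S.card := by
  have hd : (0 : ℝ) < S.card := Nat.cast_pos.2 hS.card_pos
  have hdoubling := log_ncard_bohr_le_of_le_nat_mul S (k := 6) (by norm_num)
    (r := ε - U) (r' := 2 * ε + U) (by linarith) (by push_cast; linarith)
  calc _ ≤ S.card * log (2 * (6 : ℕ)) := by linarith
    _ < S.card * 3 := mul_lt_mul_of_pos_left (by norm_num [Real.log_twelve_lt_three]) hd
    _ = 3 * S.card := mul_comm _ _

end Bohr

section Regularity

variable {G : Type*} [AddCommGroup G] [Fintype G] (S : Finset (G →+ AddCircle (1 : ℝ)))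

theorem isRegularBohr_of_forall_ncard_le_exp {ρ c : ℝ} (hρ : 0 ≤ ρ) (hc : 0 ≤ c)
    (hcρ : c * ρ ≤ 50 * S.card)
    (h : ∀ u ∈ Ioc 0 (ρ / (100 * S.card)),
      ((bohr S (ρ + u)).ncard : ℝ) ≤ exp (c * u) * (bohr S (ρ - u)).ncard) :
    IsRegularBohr S ρ := by
  have hN : Monotone fun r => ((bohr S r).ncard : ℝ) :=
    fun _ _ hr => Nat.cast_le.2 (monotone_ncard_bohr S hr)
  have hN0 : (0 : ℝ) ≤ (bohr S ρ).ncard := Nat.cast_nonneg _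
  intro κ hκ
  have hdκ : 100 * S.card * |κ| ≤ 1 :=
    calc 100 * S.card * |κ| ≤ 100 * S.card * (1 / (100 * S.card)) :=
          mul_le_mul_of_nonneg_left hκ (by positivity)
      _ ≤ 1 := by rw [mul_one_div]; exact div_self_le_one _
  have hu : |κ| * ρ ∈ Icc 0 (ρ / (100 * S.card)) :=
    ⟨by positivity, by
      rw [div_eq_mul_one_div, mul_comm ρ]; exact mul_le_mul_of_nonneg_right hκ hρ⟩
  have hcu : c * (|κ| * ρ) ≤ 50 * S.card * |κ| := by nlinarith [abs_nonneg κ]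
  have hdκ0 : 0 ≤ 100 * (S.card : ℝ) * |κ| := by positivity
  rcases le_or_gt 0 κ with hκ0 | hκ0
  · rw [abs_of_nonneg hκ0] at hdκ0 hdκ hu hcu ⊢
    rw [show (1 + κ) * ρ = ρ + κ * ρ by ring]
    have hgrow : ((bohr S ρ).ncard : ℝ) ≤ (bohr S (ρ + κ * ρ)).ncard :=
      hN (le_add_of_nonneg_right hu.1)
    have hlip :
        ((bohr S (ρ + κ * ρ)).ncard : ℝ) ≤ (1 + 2 * (c * (κ * ρ))) * (bohr S ρ).ncard :=
      hN.le_one_add_two_mul_of_forall_le_exp hN0 hc h hu (by linarith)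
    exact ⟨(mul_le_of_le_one_left hN0 (by linarith)).trans hgrow,
      hlip.trans (mul_le_mul_of_nonneg_right (by linarith) hN0)⟩
  · rw [abs_of_neg hκ0] at hdκ0 hdκ hu hcu ⊢
    rw [show (1 + κ) * ρ = ρ - -κ * ρ by ring]
    have hshrink : ((bohr S (ρ - -κ * ρ)).ncard : ℝ) ≤ (bohr S ρ).ncard :=
      hN (sub_le_self ρ hu.1)
    have hlip :
        (1 - c * (-κ * ρ)) * ((bohr S ρ).ncard : ℝ) ≤ (bohr S (ρ - -κ * ρ)).ncard :=
      hN.one_sub_mul_le_of_forall_le_exp hN0 h hu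
    exact ⟨(mul_le_mul_of_nonneg_right (by linarith) hN0).trans hlip,
      hshrink.trans (le_mul_of_one_le_left hN0 (by linarith))⟩

end Regularity

theorem regular_bohr_sets_ubiquitous_general {G : Type*} [AddCommGroup G] [Fintype G]
    (S : Finset (G →+ AddCircle (1 : ℝ))) (hS : S.Nonempty)
    (ε : ℝ) (hε0 : 0 < ε) :
    ∃ ρ : ℝ, ρ ∈ Set.Icc ε (2 * ε) ∧ IsRegularBohr S ρ := by
  have hd : (1 : ℝ) ≤ S.card := Nat.one_le_cast.2 hS.card_pos
  set c : ℝ := 25 * S.card / ε with hc_def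
  set U : ℝ := ε / (50 * S.card) with hU_def
  have hc : 0 ≤ c := by positivity
  have hU : U ≤ ε / 50 := div_le_div_of_nonneg_left hε0.le (by norm_num) (by linarith)
  have hcε : c * ε = 25 * S.card := by rw [hc_def]; field_simp
  have hgrowth :
      8 * (log (bohr S (2 * ε + U)).ncard - log (bohr S (ε - U)).ncard) < c * (2 * ε - ε) := by
    linarith [log_ncard_bohr_sub_lt S hS hε0 (by linarith : 7 * U ≤ 4 * ε)]
  obtain ⟨ρ, hρ, hflat⟩ :=
    (monotone_log_ncard_bohr S).exists_forall_sub_le_mul (by linarith) hc hgrowth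
  refine ⟨ρ, hρ, isRegularBohr_of_forall_ncard_le_exp S (by linarith [hρ.1]) hc
    (by linarith [mul_le_mul_of_nonneg_left hρ.2 hc]) fun u hu => ?_⟩
  have huU : u ≤ U := hu.2.trans <| by
    rw [hU_def, div_le_div_iff₀ (by positivity) (by positivity)]; nlinarith [hρ.2]
  have huρ : u < ρ := hu.2.trans_lt (div_lt_self (by linarith [hρ.1]) (by linarith))
  exact Real.le_exp_mul_of_log_sub_le (Nat.cast_pos.2 (ncard_bohr_pos S (by linarith [hu.1])))
    (Nat.cast_pos.2 (ncard_bohr_pos S (by linarith))) (hflat u ⟨hu.1, huU⟩)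

/-- **Regular Bohr sets are ubiquitous**: for any nonempty finite set `S` of characters and
any `0 < ε < 1` there is `ρ ∈ [ε, 2ε]` such that `B(S,ρ)` is regular. -/
theorem regular_bohr_sets_ubiquitous {G : Type*} [AddCommGroup G] [Fintype G]
    (S : Finset (G →+ AddCircle (1 : ℝ))) (hS : S.Nonempty)
    (ε : ℝ) (hε0 : 0 < ε) (hε1 : ε < 1) :
    ∃ ρ : ℝ, ρ ∈ Set.Icc ε (2 * ε) ∧ IsRegularBohr S ρ :=
  regular_bohr_sets_ubiquitous_general S hS ε hε0
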